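/- arXiv:1310.8021 — 4 statements merged into one kernel-verified Lean document; each statement's English description precedes it below -/
import Mathlib

section
/- For integers m ≥ 1, b ≥ 1, c ≥ 0, the number of semistandard Young tableaux of hook shape (b, 1, 1, ..., 1) with c ones (i.e., first row of length b and a column of c additional boxes) filled with entries from {1, ..., m} equals C(b+c-1, b-1) · C(b+m-1, b+c). -/
/-!
Write `b = b' + 1`. Splitting off the corner entry `a`, a hook tableau is a weakly increasing word
of length `b'` in `[a, m)` (a multiset: `(m - a + b' - 1).choose b'` choices) and a strictly
increasing word of length `c` in `(a, m)` (a subset: `(m - 1 - a).choose c` choices). With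
`k = m - 1 - a` the product `(k + b').choose b' * k.choose c` equals
`(b' + c).choose b' * (k + b').choose (b' + c)`, so the sum over `a` is a hockey-stick sum.
-/

/-- Semistandard Young tableaux of hook shape `(b, 1^c)` on the alphabet `{1,...,m}`:
a weakly increasing first row of length `b` together with a strictly increasing column
of `c` further entries lying strictly below (hence strictly greater than) the first
entry of the row. -/
abbrev HookSSYT (m b c : ℕ) : Type :=
  {p : (Fin b → Fin m) × (Fin c → Fin m) //
    Monotone p.1 ∧ StrictMono p.2 ∧
    ∀ (h0 : 0 < b) (h1 : 0 < c), p.1 ⟨0, h0⟩ < p.2 ⟨0, h1⟩}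

open Finset

lemma Fin.monotone_cons {α : Type*} [Preorder α] {n : ℕ} {f : Fin n → α} {a : α} :
    Monotone (Fin.cons a f : Fin (n + 1) → α) ↔ (∀ i, a ≤ f i) ∧ Monotone f := by
  simpa only [monotone_iff_forall_lt, Relator.LiftFun] using Fin.liftFun_cons (α := α) (· ≤ ·)

section Counting

variable {α : Type*} [LinearOrder α] (n : ℕ)

def strictMonoFinEquivFinset : {f : Fin n → α // StrictMono f} ≃ {s : Finset α // #s = n} where
  toFun f := ⟨univ.map ⟨f.1, f.2.injective⟩, by simp⟩
  invFun s := ⟨s.1.orderEmbOfFin s.2, (s.1.orderEmbOfFin s.2).strictMono⟩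
  left_inv f := Subtype.ext (orderEmbOfFin_unique _ (by simp) f.2).symm
  right_inv s := Subtype.ext <| coe_injective <| by simp [range_orderEmbOfFin]

def monotoneFinEquivSym : {f : Fin n → α // Monotone f} ≃ Sym α n where
  toFun f := ⟨List.ofFn f.1, by simp⟩
  invFun s := ⟨fun i => s.1.sort[i]'(by simp), fun i j h => by
    obtain h | rfl := h.lt_or_eq
    · exact List.pairwise_iff_getElem.1 (Multiset.pairwise_sort _ _) _ _ _ _ h
    · rfl⟩
  left_inv f := by
    ext i
    simp [List.mergeSort_eq_self (· ≤ ·) (List.pairwise_ofFn.2 fun i j h => f.2 h.le)]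
  right_inv s := Sym.ext <| by
    calc _ = ((s.1.sort : List α) : Multiset α) :=
          congrArg _ (List.ext_getElem (by simp) (by simp))
      _ = s := Multiset.sort_eq _ _

theorem card_strictMono_fin_eq_choose [Finite α] :
    Nat.card {f : Fin n → α // StrictMono f} = (Nat.card α).choose n := by
  cases nonempty_fintype α
  rw [Nat.card_congr (strictMonoFinEquivFinset n), Nat.card_eq_fintype_card,
    Fintype.card_finset_len, Nat.card_eq_fintype_card]

theorem card_monotone_fin_eq_choose :
    Nat.card {f : Fin n → α // Monotone f} = (Nat.card α + n - 1).choose n := by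
  rw [Nat.card_congr (monotoneFinEquivSym n), Sym.natCard_sym_eq_choose]

end Counting

def HookSSYT.equivSigma (m b c : ℕ) :
    HookSSYT m (b + 1) c ≃
      Σ a : Fin m, {f : Fin b → Set.Ici a // Monotone f} ×
        {g : Fin c → Set.Ioi a // StrictMono g} where
  toFun p :=
    ⟨p.1.1 0,
      ⟨fun i => ⟨p.1.1 i.succ, p.2.1 (Fin.zero_le _)⟩,
        fun _ _ h => p.2.1 (Fin.succ_le_succ_iff.2 h)⟩,
      ⟨fun j => ⟨p.1.2 j,
          (p.2.2.2 b.succ_pos j.pos).trans_le (p.2.2.1.monotone (Nat.zero_le j.val))⟩,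
        fun _ _ h => p.2.2.1 h⟩⟩
  invFun q :=
    ⟨(Fin.cons q.1 (fun i => (q.2.1.1 i).1), fun j => (q.2.2.1 j).1),
      Fin.monotone_cons.2 ⟨fun i => (q.2.1.1 i).2, q.2.1.2⟩,
      q.2.2.2,
      fun _ h1 => (q.2.2.1 ⟨0, h1⟩).2⟩
  left_inv _ := Subtype.ext <| Prod.ext (Fin.cons_self_tail _) rfl
  right_inv _ := rfl

theorem Nat.sum_range_add_choose_add (m b c : ℕ) :
    ∑ k ∈ range m, (k + b).choose (b + c) = (m + b).choose (b + c + 1) := by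
  induction m with
  | zero => simp [Nat.choose_eq_zero_of_lt]
  | succ m ih => rw [sum_range_succ, ih, Nat.succ_add, Nat.choose_succ_succ', add_comm]

theorem Nat.add_choose_mul_choose (k b c : ℕ) :
    (k + b).choose b * k.choose c = (b + c).choose b * (k + b).choose (b + c) := by
  have := Nat.choose_mul (n := k + b) (Nat.le_add_right b c)
  rw [Nat.add_sub_cancel, Nat.add_sub_cancel_left] at this
  rw [← this, mul_comm]

theorem Nat.sum_range_add_choose_mul_choose (m b c : ℕ) :
    ∑ k ∈ range m, (k + b).choose b * k.choose c =
      (b + c).choose b * (m + b).choose (b + c + 1) := by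
  simp only [Nat.add_choose_mul_choose, ← mul_sum, Nat.sum_range_add_choose_add]

theorem ssyt_hook_count_general (m b c : ℕ) (hb : 1 ≤ b) :
    Nat.card (HookSSYT m b c) =
      (b + c - 1).choose (b - 1) * (b + m - 1).choose (b + c) := by
  obtain ⟨b, rfl⟩ := Nat.exists_eq_add_of_le' hb
  have card_fiber (a : Fin m) :
      Nat.card ({f : Fin b → Set.Ici a // Monotone f} × {g : Fin c → Set.Ioi a // StrictMono g}) =
        (m - 1 - a + b).choose b * (m - 1 - a).choose c := by
    rw [Nat.card_prod, card_monotone_fin_eq_choose, card_strictMono_fin_eq_choose]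
    simp only [Nat.card_eq_fintype_card, Fintype.card_Ici, Fintype.card_Ioi, Fin.card_Ici,
      Fin.card_Ioi]
    rw [show m - a + b - 1 = m - 1 - a + b by omega]
  rw [Nat.card_congr (HookSSYT.equivSigma m b c), Nat.card_sigma]
  simp only [card_fiber]
  rw [Fin.sum_univ_eq_sum_range (fun a => (m - 1 - a + b).choose b * (m - 1 - a).choose c),
    sum_range_reflect (fun k => (k + b).choose b * k.choose c),
    Nat.sum_range_add_choose_mul_choose]
  rw [Nat.add_right_comm b 1 m, Nat.add_right_comm b 1 c, add_comm m b]
  simp only [Nat.add_sub_cancel]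

theorem ssyt_hook_count (m b c : ℕ) (hm : 1 ≤ m) (hb : 1 ≤ b) :
    Nat.card (HookSSYT m b c) =
      (b + c - 1).choose (b - 1) * (b + m - 1).choose (b + c) :=
  ssyt_hook_count_general m b c hb
end

section
/- Let P be an N×N Markov transition matrix whose eigenvalues β_1,...,β_{N-1}, β_N = 1 satisfy β_j ≠ 1 for j < N, with stationary distribution π, and let Π(x,y) = π(y). Let e_1,...,e_{N-1} be the elementary symmetric polynomials in β_1,...,β_{N-1} and g(x) = (x-β_1)···(x-β_{N-1}). Then g(P - Π) = (-1)^{N-1} e_{N-1} Π; equivalently, (P^{N-1} - Π) - e_1(P^{N-2} - Π) + e_2(P^{N-3} - Π) - ··· + (-1)^{N-1} e_{N-1}(I - Π) = 0. -/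
/-!
Write `Π = 𝟙 π` and `M = g(P) - g(1) Π`. Cayley–Hamilton for `(X - 1) g` gives `P M = M`, and
`π M = 0` because `π P = π` and `π 𝟙 = 1`. As `1` is a simple root of the characteristic
polynomial and geometric multiplicity is bounded by algebraic multiplicity, the fixed vectors of
`P` are the multiples of `𝟙`; so every column of `M` is `c 𝟙` with `c = π (c 𝟙) = 0`. Expanding
`g` by Vieta's formulas gives the stated identity.
-/

open Polynomial Matrix Module Finset

theorem Finset.aeval_prod_X_sub_C_eq_sum_esymm {ι R S : Type*} [CommRing R] [Ring S]
    [Algebra R S] (s : Finset ι) (β : ι → R) (a : S) :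
    aeval a (∏ j ∈ s, (X - C (β j))) =
      ∑ k ∈ range (#s + 1),
        ((-1) ^ k * ∑ T ∈ s.powersetCard k, ∏ j ∈ T, β j) • a ^ (#s - k) := by
  have h := Multiset.prod_X_sub_X_eq_sum_esymm (s.val.map β)
  rw [Multiset.map_map, Function.comp_def, Multiset.card_map, card_val] at h
  rw [prod_eq_multiset_prod, h, map_sum]
  refine sum_congr rfl fun k _ => ?_
  rw [esymm_map_val, Algebra.smul_def]
  simp only [map_mul, map_pow, map_neg, map_one, aeval_C, aeval_X, mul_assoc]

theorem Polynomial.rootMultiplicity_X_sub_C_mul {R : Type*} [CommRing R] {a : R} {g : R[X]}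
    (hg : g.eval a ≠ 0) : ((X - C a) * g).rootMultiplicity a = 1 := by
  have hg0 : g ≠ 0 := fun h => hg (by rw [h, eval_zero])
  rw [mul_comm, ← pow_one (X - C a), rootMultiplicity_mul_X_sub_C_pow hg0,
    rootMultiplicity_eq_zero hg]

namespace Matrix

section CommRing

variable {n R : Type*} [Fintype n] [DecidableEq n] [CommRing R] {A : Matrix n n R}

theorem pow_mulVec_of_mulVec_eq_self {u : n → R} (hu : A *ᵥ u = u) (k : ℕ) :
    A ^ k *ᵥ u = u := by
  induction k with
  | zero => simp
  | succ k ih => rw [pow_succ, ← mulVec_mulVec, hu, ih]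

theorem vecMul_pow_of_vecMul_eq_self {w : n → R} (hw : w ᵥ* A = w) (k : ℕ) :
    w ᵥ* A ^ k = w := by
  induction k with
  | zero => simp
  | succ k ih => rw [pow_succ, ← vecMul_vecMul, ih, hw]

theorem aeval_mulVec_of_mulVec_eq_self {u : n → R} (hu : A *ᵥ u = u) (p : R[X]) :
    aeval A p *ᵥ u = p.eval 1 • u := by
  induction p using Polynomial.induction_on' with
  | add p q hp hq => rw [map_add, add_mulVec, hp, hq, eval_add, add_smul]
  | monomial k a =>
    rw [aeval_monomial, eval_monomial, one_pow, mul_one, Algebra.algebraMap_eq_smul_one,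
      smul_mul_assoc, one_mul, smul_mulVec, pow_mulVec_of_mulVec_eq_self hu]

theorem vecMul_aeval_of_vecMul_eq_self {w : n → R} (hw : w ᵥ* A = w) (p : R[X]) :
    w ᵥ* aeval A p = p.eval 1 • w := by
  induction p using Polynomial.induction_on' with
  | add p q hp hq => rw [map_add, vecMul_add, hp, hq, eval_add, add_smul]
  | monomial k a =>
    rw [aeval_monomial, eval_monomial, one_pow, mul_one, Algebra.algebraMap_eq_smul_one,
      smul_mul_assoc, one_mul, vecMul_smul, vecMul_pow_of_vecMul_eq_self hw]

theorem mul_aeval_eq_self_of_charpoly_eq {g : R[X]} (hchar : A.charpoly = (X - 1) * g) :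
    A * aeval A g = aeval A g := by
  have h := A.aeval_self_charpoly
  rwa [hchar, map_mul, map_sub, aeval_X, map_one, sub_mul, one_mul, sub_eq_zero] at h

end CommRing

section Field

variable {n K : Type*} [Fintype n] [DecidableEq n] [Field K] {A : Matrix n n K}

theorem eigenspace_toLin'_eq_span_singleton {μ : K} (hA : A.charpoly.rootMultiplicity μ ≤ 1)
    {u : n → K} (hu : A *ᵥ u = μ • u) (hu0 : u ≠ 0) :
    Module.End.eigenspace (toLin' A) μ = K ∙ u := by
  have hmem : u ∈ Module.End.eigenspace (toLin' A) μ := Module.End.mem_eigenspace_iff.mpr hu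
  refine (Submodule.eq_of_le_of_finrank_le
    ((Submodule.span_singleton_le_iff_mem _ _).mpr hmem) ?_).symm
  calc finrank K (Module.End.eigenspace (toLin' A) μ)
      ≤ (toLin' A).charpoly.rootMultiplicity μ := LinearMap.finrank_eigenspace_le _ _
    _ ≤ 1 := by rwa [charpoly_toLin']
    _ = finrank K (K ∙ u) := (finrank_span_singleton hu0).symm

theorem aeval_eq_smul_vecMulVec_of_charpoly_eq {u w : n → K} {g : K[X]}
    (hu : A *ᵥ u = u) (hw : w ᵥ* A = w) (hwu : w ⬝ᵥ u = 1)
    (hchar : A.charpoly = (X - 1) * g) (hg : g.eval 1 ≠ 0) :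
    aeval A g = g.eval 1 • vecMulVec u w := by
  set M := aeval A g - g.eval 1 • vecMulVec u w
  have hAM : A * M = M := by
    rw [mul_sub, mul_aeval_eq_self_of_charpoly_eq hchar, mul_smul_comm, mul_vecMulVec, hu]
  have hwM : w ᵥ* M = 0 := by
    rw [vecMul_sub, vecMul_aeval_of_vecMul_eq_self hw, vecMul_smul, vecMul_vecMulVec, hwu,
      one_smul, sub_self]
  have hu0 : u ≠ 0 := by
    rintro rfl
    simp at hwu
  have heig : Module.End.eigenspace (toLin' A) 1 = K ∙ u :=
    eigenspace_toLin'_eq_span_singleton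
      (by rw [hchar, ← C_1]; exact (rootMultiplicity_X_sub_C_mul hg).le)
      (by rw [one_smul, hu]) hu0
  rw [← sub_eq_zero]
  refine mulVec_injective (funext fun x => ?_)
  have hfix : M *ᵥ x ∈ Module.End.eigenspace (toLin' A) 1 := by
    rw [Module.End.mem_eigenspace_iff, toLin'_apply, mulVec_mulVec, hAM, one_smul]
  rw [heig] at hfix
  obtain ⟨c, hc⟩ := Submodule.mem_span_singleton.mp hfix
  have hc0 : c = 0 := by
    simpa [dotProduct_smul, hwu, dotProduct_mulVec, hwM] using congrArg (w ⬝ᵥ ·) hc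
  rw [zero_mulVec, ← hc, hc0, zero_smul]

theorem sum_esymm_smul_pow_sub_vecMulVec_eq_zero {ι : Type*} {s : Finset ι} {β : ι → K}
    {u w : n → K} (hu : A *ᵥ u = u) (hw : w ᵥ* A = w) (hwu : w ⬝ᵥ u = 1)
    (hchar : A.charpoly = (X - 1) * ∏ j ∈ s, (X - C (β j))) (hβ : ∀ j ∈ s, β j ≠ 1) :
    ∑ k ∈ range (#s + 1), ((-1) ^ k * ∑ T ∈ s.powersetCard k, ∏ j ∈ T, β j) •
      (A ^ (#s - k) - vecMulVec u w) = 0 := by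
  have hg : (∏ j ∈ s, (X - C (β j))).eval 1 ≠ 0 := by
    rw [eval_prod, prod_ne_zero_iff]
    intro j hj
    rw [eval_sub, eval_X, eval_C, sub_ne_zero]
    exact (hβ j hj).symm
  have key := aeval_eq_smul_vecMulVec_of_charpoly_eq hu hw hwu hchar hg
  rw [← coe_aeval_eq_eval, aeval_prod_X_sub_C_eq_sum_esymm,
    aeval_prod_X_sub_C_eq_sum_esymm] at key
  simp_rw [smul_sub]
  rw [sum_sub_distrib, ← sum_smul, key]
  simp only [one_pow, smul_eq_mul, mul_one, sub_self]

end Field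

end Matrix

theorem cayley_hamilton_pi_general (N : ℕ)
    (P : Matrix (Fin N) (Fin N) ℝ) (piv : Fin N → ℝ)
    (hProw : ∀ i, ∑ j, P i j = 1)
    (hpiv1 : ∑ i, piv i = 1)
    (hstat : ∀ j, ∑ i, piv i * P i j = piv j)
    (β : Fin N → ℂ)
    (hchar : (P.map (fun a => (a : ℂ))).charpoly
      = ∏ j, (Polynomial.X - Polynomial.C (β j)))
    (hlast : ∀ j : Fin N, (j : ℕ) = N - 1 → β j = 1)
    (hne : ∀ j : Fin N, (j : ℕ) < N - 1 → β j ≠ 1) :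
    ∑ k ∈ Finset.range N, ((-1 : ℂ) ^ k *
        (∑ S ∈ (Finset.univ.filter (fun j : Fin N => (j : ℕ) < N - 1)).powersetCard k,
          ∏ j ∈ S, β j)) •
      ((P.map (fun a => (a : ℂ))) ^ (N - 1 - k) - Matrix.of (fun _ y => (piv y : ℂ)))
      = 0 := by
  rcases Nat.eq_zero_or_pos N with rfl | hN
  · simp
  set Q := P.map (fun a => (a : ℂ))
  set w : Fin N → ℂ := fun i => piv i
  set F := univ.filter (fun j : Fin N => (j : ℕ) < N - 1)
  let last : Fin N := ⟨N - 1, by omega⟩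
  have hF : F = univ.erase last := by
    ext j
    simp only [F, mem_filter, mem_univ, true_and, mem_erase, and_true, ne_eq, Fin.ext_iff, last]
    omega
  have hcard : #F = N - 1 := by
    rw [hF, card_erase_of_mem (mem_univ _), card_univ, Fintype.card_fin]
  have hu : Q *ᵥ 1 = 1 := by
    ext i
    simpa [Q, mulVec, dotProduct] using congrArg (fun x : ℝ => (x : ℂ)) (hProw i)
  have hw : w ᵥ* Q = w := by
    ext j
    simpa [Q, w, vecMul, dotProduct] using congrArg (fun x : ℝ => (x : ℂ)) (hstat j)
  have hwu : w ⬝ᵥ 1 = 1 := by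
    simpa [w, dotProduct] using congrArg (fun x : ℝ => (x : ℂ)) hpiv1
  have hPi : Matrix.of (fun _ y => (piv y : ℂ)) = vecMulVec (1 : Fin N → ℂ) w := by
    ext
    simp [vecMulVec, w]
  have hQchar : Q.charpoly = (X - 1) * ∏ j ∈ F, (X - C (β j)) := by
    rw [hchar, ← mul_prod_erase univ _ (mem_univ last), hlast last rfl, map_one, ← hF]
  have h := sum_esymm_smul_pow_sub_vecMulVec_eq_zero hu hw hwu hQchar
    fun j hj => hne j (mem_filter.mp hj).2
  rwa [hcard, Nat.sub_add_cancel hN, ← hPi] at h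

/-- Proposition 5.1 of the paper: if the eigenvalues of the Markov matrix `P` are
`β_1, ..., β_{N-1}, β_N = 1` with `β_j ≠ 1` for `j < N`, `piv` is the stationary
distribution and `Π(x,y) = piv y`, then
`∑_{k=0}^{N-1} (-1)^k e_k (P^{N-1-k} - Π) = 0`, where `e_k` is the `k`-th elementary
symmetric polynomial in `β_1, ..., β_{N-1}`.  (Everything is viewed over `ℂ` since
eigenvalues may be complex.) -/
theorem cayley_hamilton_pi (N : ℕ) (hN : 2 ≤ N)
    (P : Matrix (Fin N) (Fin N) ℝ) (piv : Fin N → ℝ)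
    (hP0 : ∀ i j, 0 ≤ P i j) (hProw : ∀ i, ∑ j, P i j = 1)
    (hpiv0 : ∀ i, 0 ≤ piv i) (hpiv1 : ∑ i, piv i = 1)
    (hstat : ∀ j, ∑ i, piv i * P i j = piv j)
    (β : Fin N → ℂ)
    (hchar : (P.map (fun a => (a : ℂ))).charpoly
      = ∏ j, (Polynomial.X - Polynomial.C (β j)))
    (hlast : ∀ j : Fin N, (j : ℕ) = N - 1 → β j = 1)
    (hne : ∀ j : Fin N, (j : ℕ) < N - 1 → β j ≠ 1) :
    ∑ k ∈ Finset.range N, ((-1 : ℂ) ^ k *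
        (∑ S ∈ (Finset.univ.filter (fun j : Fin N => (j : ℕ) < N - 1)).powersetCard k,
          ∏ j ∈ S, β j)) •
      ((P.map (fun a => (a : ℂ))) ^ (N - 1 - k) - Matrix.of (fun _ y => (piv y : ℂ)))
      = 0 :=
  cayley_hamilton_pi_general N P piv hProw hpiv1 hstat β hchar hlast hne
end

section
/- Under the hypotheses of the previous statement (P Markov with eigenvalues β_1,...,β_{N-1} ≠ 1 and β_N = 1, stationary π, Π the matrix of rows π), let C be the companion matrix of g(x) = (x-β_1)···(x-β_{N-1}). Then for all t ≥ 0, P^t - Π = Σ_{k=0}^{N-2} C^t(k+1, 1) (P^k - Π). -/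
/-!
Write `Π` for the matrix all of whose rows are `π`. Since `P` fixes the constant vectors and
`π` is stationary, `P Π = Π P = Π`, so `P^k - Π = P^k (1 - Π)`. By Cayley–Hamilton
`(P - 1) g(P) = 0`, so every column of `g(P)` is a fixed vector of `P`; as `1` is a simple root
of the characteristic polynomial, these are constant, hence all rows of `g(P)` agree and
`g(P) = Π g(P) = g(1) Π`. Therefore `g(P) (1 - Π) = 0`: the sequence `P^k (1 - Π)` obeys the
linear recurrence with characteristic polynomial `g`, whose solution is read off from the powers
of the companion matrix.
-/

open Polynomial Matrix Module Finset

section Companion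

variable {R A : Type*} [CommRing R] [Ring A] [Algebra R A]

def companion (p : R[X]) (n : ℕ) : Matrix (Fin n) (Fin n) R :=
  of fun i j => if (i : ℕ) = j + 1 then 1 else if (j : ℕ) + 1 = n then -p.coeff i else 0

theorem Polynomial.Monic.aeval_eq_pow_add_sum {p : R[X]} (hp : p.Monic) (x : A) :
    aeval x p = x ^ p.natDegree + ∑ i ∈ Finset.range p.natDegree, p.coeff i • x ^ i := by
  rw [aeval_eq_sum_range, Finset.sum_range_succ, hp.coeff_natDegree, one_smul, add_comm]

theorem pow_succ_mul_eq_sum_companion {p : R[X]} (hp : p.Monic) {n : ℕ} (hn : p.natDegree = n)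
    {x d : A} (hpd : aeval x p * d = 0) (k : Fin n) :
    x ^ ((k : ℕ) + 1) * d = ∑ i : Fin n, companion p n i k • (x ^ (i : ℕ) * d) := by
  by_cases hk : (k : ℕ) + 1 = n
  · have hsum : x ^ n * d + ∑ i : Fin n, p.coeff i • (x ^ (i : ℕ) * d) = 0 := by
      rw [← hpd, hp.aeval_eq_pow_add_sum, hn, add_mul, Finset.sum_mul,
        Fin.sum_univ_eq_sum_range (fun i => p.coeff i • (x ^ i * d))]
      simp only [smul_mul_assoc]
    rw [hk, eq_neg_of_add_eq_zero_left hsum, ← Finset.sum_neg_distrib]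
    refine Finset.sum_congr rfl fun i _ => ?_
    have hi : (i : ℕ) ≠ k + 1 := by omega
    rw [companion, of_apply, if_neg hi, if_pos hk, neg_smul]
  · have hk' : (k : ℕ) + 1 < n := by omega
    rw [Finset.sum_eq_single ⟨k + 1, hk'⟩]
    · simp [companion]
    · intro i _ hi
      have hi' : (i : ℕ) ≠ k + 1 := fun h => hi (Fin.ext h)
      simp [companion, hi', hk]
    · simp

/-- Column `0` of `(companion p n) ^ t` holds the coordinates of `X ^ t` modulo `p` in the basis
`1, X, …, X ^ (n - 1)`. -/
theorem pow_mul_eq_sum_companion_pow {p : R[X]} (hp : p.Monic) {n : ℕ} (hn : p.natDegree = n)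
    (hn0 : 0 < n) {x d : A} (hpd : aeval x p * d = 0) (t : ℕ) :
    x ^ t * d = ∑ k : Fin n, (companion p n ^ t) k ⟨0, hn0⟩ • (x ^ (k : ℕ) * d) := by
  induction t with
  | zero =>
    rw [Finset.sum_eq_single ⟨0, hn0⟩ (fun i _ hi => by simp [one_apply_ne hi]) (by simp)]
    simp
  | succ t ih =>
    calc x ^ (t + 1) * d = x * (x ^ t * d) := by rw [pow_succ', mul_assoc]
      _ = ∑ k : Fin n, (companion p n ^ t) k ⟨0, hn0⟩ • (x ^ ((k : ℕ) + 1) * d) := by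
        simp [ih, Finset.mul_sum, pow_succ', mul_assoc]
      _ = ∑ k : Fin n, (companion p n ^ t) k ⟨0, hn0⟩ •
            ∑ i : Fin n, companion p n i k • (x ^ (i : ℕ) * d) := by
        simp only [pow_succ_mul_eq_sum_companion hp hn hpd]
      _ = ∑ i : Fin n, (companion p n ^ (t + 1)) i ⟨0, hn0⟩ • (x ^ (i : ℕ) * d) := by
        simp only [Finset.smul_sum, smul_smul, pow_succ', mul_apply, Finset.sum_smul]
        rw [Finset.sum_comm]
        simp only [mul_comm]

end Companion

theorem Finset.prod_X_sub_C_coeff {R ι : Type*} [CommRing R] (s : Finset ι) (f : ι → R)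
    {k : ℕ} (hk : k ≤ #s) : (∏ i ∈ s, (X - C (f i))).coeff k =
      (-1) ^ (#s - k) * ∑ S ∈ s.powersetCard (#s - k), ∏ i ∈ S, f i := by
  have hv := Multiset.prod_X_sub_C_coeff (s.val.map f) (k := k) (by simpa using hk)
  rw [Multiset.map_map, Multiset.card_map, Finset.esymm_map_val] at hv
  exact hv

section FixedPoint

variable {R A : Type*} [CommRing R] [Ring A] [Algebra R A] {x e : A}

theorem pow_mul_eq_self_of_mul_eq_self (h : x * e = e) (k : ℕ) : x ^ k * e = e := by
  induction k with
  | zero => simp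
  | succ k ih => rw [pow_succ, mul_assoc, h, ih]

theorem mul_pow_eq_self_of_mul_eq_self (h : e * x = e) (k : ℕ) : e * x ^ k = e := by
  induction k with
  | zero => simp
  | succ k ih => rw [pow_succ, ← mul_assoc, ih, h]

theorem aeval_mul_of_mul_eq_self (h : x * e = e) (p : R[X]) : aeval x p * e = p.eval 1 • e := by
  induction p using Polynomial.induction_on' with
  | add p q hp hq => simp [add_mul, hp, hq, add_smul]
  | monomial k a =>
    rw [aeval_monomial, ← Algebra.smul_def, smul_mul_assoc, pow_mul_eq_self_of_mul_eq_self h,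
      eval_monomial, one_pow, mul_one]

theorem mul_aeval_of_mul_eq_self (h : e * x = e) (p : R[X]) : e * aeval x p = p.eval 1 • e := by
  induction p using Polynomial.induction_on' with
  | add p q hp hq => simp [mul_add, hp, hq, add_smul]
  | monomial k a =>
    rw [aeval_monomial, ← Algebra.smul_def, mul_smul_comm, mul_pow_eq_self_of_mul_eq_self h,
      eval_monomial, one_pow, mul_one]

end FixedPoint

theorem Submodule.mem_span_singleton_of_finrank_le_one {K V : Type*} [Field K] [AddCommGroup V]
    [Module K V] {S : Submodule K V} [FiniteDimensional K S] (hS : finrank K S ≤ 1) {u v : V}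
    (hu : u ∈ S) (hu0 : u ≠ 0) (hv : v ∈ S) : v ∈ K ∙ u := by
  have hle : K ∙ u ≤ S := (Submodule.span_singleton_le_iff_mem u S).mpr hu
  rwa [Submodule.eq_of_le_of_finrank_le hle (hS.trans (finrank_span_singleton hu0).ge)]

theorem rootMultiplicity_X_sub_C_mul_of_eval_ne_zero {K : Type*} [Field K] {g : K[X]} {a : K}
    (hg : g.eval a ≠ 0) : ((X - C a) * g).rootMultiplicity a = 1 := by
  have hg0 : g ≠ 0 := fun h => hg (by simp [h])
  rw [rootMultiplicity_mul (mul_ne_zero (X_sub_C_ne_zero a) hg0), rootMultiplicity_X_sub_C_self,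
    rootMultiplicity_eq_zero hg]

namespace Matrix

section Semiring

variable {α : Type*} [Semiring α] {n : Type*} [Fintype n] {Q : Matrix n n α}

theorem mul_replicateRow_of_mulVec_one (hQ : Q *ᵥ 1 = 1) (π : n → α) :
    Q * replicateRow n π = replicateRow n π := by
  ext i j
  have hi := congrFun hQ i
  simp only [mulVec, dotProduct, Pi.one_apply, mul_one] at hi
  simp [mul_apply, ← Finset.sum_mul, hi]

theorem replicateRow_mul_of_vecMul_eq {π : n → α} (hπ : π ᵥ* Q = π) :
    replicateRow n π * Q = replicateRow n π := by
  rw [← replicateRow_vecMul, hπ]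

end Semiring

variable {K : Type*} [Field K] {n : Type*} [Fintype n] [DecidableEq n] {Q : Matrix n n K}

theorem apply_eq_apply_of_mulVec_eq_self (hQ : Q *ᵥ 1 = 1)
    (hmult : Q.charpoly.rootMultiplicity 1 ≤ 1) {v : n → K} (hv : Q *ᵥ v = v) (i i' : n) :
    v i = v i' := by
  set E := Module.End.eigenspace (toLin' Q) 1
  have hE : finrank K E ≤ 1 :=
    (LinearMap.finrank_eigenspace_le _ 1).trans (by rwa [Matrix.charpoly_toLin'])
  have hmem : ∀ w : n → K, Q *ᵥ w = w → w ∈ E := fun w hw => by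
    rw [Module.End.mem_eigenspace_iff, one_smul, toLin'_apply, hw]
  have h10 : (1 : n → K) ≠ 0 := fun h => one_ne_zero (congrFun h i)
  obtain ⟨c, rfl⟩ := Submodule.mem_span_singleton.mp
    (Submodule.mem_span_singleton_of_finrank_le_one hE (hmem 1 hQ) h10 (hmem v hv))
  simp

theorem aeval_eq_eval_one_smul_replicateRow (hQ : Q *ᵥ 1 = 1) {π : n → K}
    (hπ : π ᵥ* Q = π) (hπ1 : ∑ i, π i = 1) {g : K[X]} (hchar : Q.charpoly = (X - C 1) * g)
    (hg : g.eval 1 ≠ 0) :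
    aeval Q g = g.eval 1 • replicateRow n π := by
  set G := aeval Q g
  have hQG : Q * G = G := by
    have hCH := aeval_self_charpoly Q
    rwa [hchar, map_mul, map_sub, aeval_X, aeval_C, map_one, sub_mul, one_mul,
      sub_eq_zero] at hCH
  have hmult : Q.charpoly.rootMultiplicity 1 ≤ 1 := by
    rw [hchar, rootMultiplicity_X_sub_C_mul_of_eval_ne_zero hg]
  have hcol (j : n) (i i' : n) : G i j = G i' j :=
    apply_eq_apply_of_mulVec_eq_self hQ hmult (v := fun i => G i j)
      (funext fun i => congrFun (congrFun hQG i) j) i i'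
  calc G = replicateRow n π * G := by
        ext i j
        simp [mul_apply, hcol j _ i, ← Finset.sum_mul, hπ1]
    _ = g.eval 1 • replicateRow n π :=
      mul_aeval_of_mul_eq_self (replicateRow_mul_of_vecMul_eq hπ) g

end Matrix

/-- Matrix indices of `C` are 0-based: the paper's `C^t(k+1,1)` is `(C ^ t) k ⟨0, _⟩`. -/
theorem pow_sub_pi_companion (N : ℕ) (hN : 2 ≤ N)
    (P : Matrix (Fin N) (Fin N) ℝ) (piv : Fin N → ℝ)
    (hProw : ∀ i, ∑ j, P i j = 1)
    (hpiv1 : ∑ i, piv i = 1)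
    (hstat : ∀ j, ∑ i, piv i * P i j = piv j)
    (β : Fin N → ℂ)
    (hchar : (P.map (fun a => (a : ℂ))).charpoly
      = ∏ j, (Polynomial.X - Polynomial.C (β j)))
    (hlast : ∀ j : Fin N, (j : ℕ) = N - 1 → β j = 1)
    (hne : ∀ j : Fin N, (j : ℕ) < N - 1 → β j ≠ 1)
    (C : Matrix (Fin (N - 1)) (Fin (N - 1)) ℂ)
    (hC : ∀ i j : Fin (N - 1), C i j =
      if (i : ℕ) = (j : ℕ) + 1 then 1
      else if (j : ℕ) = N - 2 then
        (-1 : ℂ) ^ (N - 2 - (i : ℕ)) *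
          (∑ S ∈ (Finset.univ.filter (fun l : Fin N => (l : ℕ) < N - 1)).powersetCard
              (N - 1 - (i : ℕ)),
            ∏ l ∈ S, β l)
      else 0)
    (t : ℕ) :
    (P.map (fun a => (a : ℂ))) ^ t - Matrix.of (fun _ y => (piv y : ℂ))
      = ∑ k : Fin (N - 1), (C ^ t) k ⟨0, by omega⟩ •
          ((P.map (fun a => (a : ℂ))) ^ (k : ℕ) - Matrix.of (fun _ y => (piv y : ℂ))) := by
  set Q := P.map (fun a => (a : ℂ))
  set π : Fin N → ℂ := fun i => (piv i : ℂ)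
  set s := univ.filter (fun l : Fin N => (l : ℕ) < N - 1)
  set g := ∏ j ∈ s, (X - Polynomial.C (β j))
  have hQ1 : Q *ᵥ 1 = 1 := funext fun i => by
    simpa [Q, mulVec, dotProduct] using congrArg ((↑) : ℝ → ℂ) (hProw i)
  have hπQ : π ᵥ* Q = π := funext fun j => by
    simpa [Q, π, vecMul, dotProduct] using congrArg ((↑) : ℝ → ℂ) (hstat j)
  have hπ1 : ∑ i, π i = 1 := by simp only [π]; exact_mod_cast hpiv1
  have hs : s = univ.erase ⟨N - 1, by omega⟩ := by
    ext l
    have := l.isLt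
    simp only [s, mem_filter, mem_univ, true_and, mem_erase, ne_eq, Fin.ext_iff, and_true]
    omega
  have hsplit : Q.charpoly = (X - Polynomial.C 1) * g := by
    rw [hchar, ← mul_prod_erase univ _ (mem_univ (⟨N - 1, by omega⟩ : Fin N)), hlast _ rfl,
      ← hs]
  have hg1 : g.eval 1 ≠ 0 := by
    rw [eval_prod, prod_ne_zero_iff]
    intro j hj
    simpa only [eval_sub, eval_X, eval_C] using sub_ne_zero.mpr (hne j (mem_filter.mp hj).2).symm
  have hcard : #s = N - 1 := by simp [hs]
  have hdeg : g.natDegree = N - 1 := by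
    rw [natDegree_prod_of_monic _ _ fun j _ => monic_X_sub_C _]
    simp [hcard]
  have hCg : C = companion g (N - 1) := by
    ext i j
    rw [hC, companion, of_apply, prod_X_sub_C_coeff s β (by omega), hcard]
    have hsign : N - 1 - (i : ℕ) = N - 2 - i + 1 := by omega
    simp only [show (j : ℕ) = N - 2 ↔ (j : ℕ) + 1 = N - 1 by omega, hsign, pow_succ]
    split_ifs <;> ring
  have hG := aeval_eq_eval_one_smul_replicateRow hQ1 hπQ hπ1 hsplit hg1
  have hQpi := mul_replicateRow_of_mulVec_one hQ1 π
  have hpow (k : ℕ) :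
      Q ^ k * (1 - replicateRow (Fin N) π) = Q ^ k - replicateRow (Fin N) π := by
    rw [mul_sub, mul_one, pow_mul_eq_self_of_mul_eq_self hQpi]
  have key := pow_mul_eq_sum_companion_pow (monic_prod_of_monic _ _ fun j _ => monic_X_sub_C _)
    hdeg (by omega) (x := Q) (d := 1 - replicateRow (Fin N) π)
    (by rw [mul_sub, mul_one, aeval_mul_of_mul_eq_self hQpi, hG, sub_self]) t
  rw [hCg]
  simp only [hpow] at key
  exact key
end

section
/- Let P be a Markov transition matrix on a state space of size N with absolute spectral gap 1 - β_⋆ > 0, relaxation time t_rel = 1/(1-β_⋆), and unique stationary distribution π. For every 0 < ε < 1, the total variation mixing time satisfies t_mix(ε) ≤ 2N·t_rel·log(t_rel) + 4(1+log 2)·N·t_rel + 2(log(1/ε) - 1)·t_rel. -/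
/-!
Let `b_0, …, b_{N-1}` be the eigenvalues of `P`, with `b_{N-1} = 1`, and `Q_k = ∏_{j<k} (P - b_j)`.
Expanding `X^t` in the Newton basis gives `P^t = ∑_{k<N} c_{t,k} Q_k`, where
`c_{t,k} = h_{t-k}(b_0, …, b_k)` is a complete homogeneous symmetric polynomial; terms with `k ≥ N`
vanish by Cayley–Hamilton. Let `Π` be the matrix all of whose rows are `π`. Since `1` is a simple
eigenvalue, `P Q_{N-1} = Q_{N-1}` forces the columns of `Q_{N-1}` to be constant, so
`Π Q_{N-1} = Q_{N-1}`; together with `Π P = Π` this kills the one non-decaying term in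
`P^t - Π = (1 - Π) P^t`. The remaining terms involve only eigenvalues of modulus `≤ β_⋆`, so
`|c_{t,k}| ≤ C(t,k) β_⋆^{t-k}`, while `‖(1 - Π) Q_k‖ ≤ 2^{k+1}` in the max-row-sum norm.
Elementary estimates then bound the total variation distance at time `t` by
`(4 e t_rel)^{N-1} exp(-t / (2 t_rel))`, which is at most `ε` at the stated time.
-/

open Polynomial Finset Matrix Real Module

section NewtonExpansion

variable {R : Type*} [CommRing R] (b : ℕ → R)

noncomputable def newtonPoly (k : ℕ) : R[X] := ∏ j ∈ range k, (X - C (b j))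

/-- `newtonCoeff b t k = h_{t-k}(b 0, …, b k)` is the coefficient of `newtonPoly b k` in `X ^ t`. -/
def newtonCoeff : ℕ → ℕ → R
  | 0, k => if k = 0 then 1 else 0
  | t + 1, 0 => b 0 * newtonCoeff t 0
  | t + 1, k + 1 => newtonCoeff t k + b (k + 1) * newtonCoeff t (k + 1)

theorem newtonCoeff_eq_zero_of_lt : ∀ {t k : ℕ}, t < k → newtonCoeff b t k = 0
  | 0, k + 1, _ => rfl
  | t + 1, k + 1, h => by
    rw [newtonCoeff, newtonCoeff_eq_zero_of_lt (by omega), newtonCoeff_eq_zero_of_lt (by omega),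
      mul_zero, add_zero]

theorem monic_newtonPoly (k : ℕ) : (newtonPoly b k).Monic :=
  monic_prod_of_monic _ _ fun j _ => monic_X_sub_C (b j)

theorem X_mul_newtonPoly (k : ℕ) :
    X * newtonPoly b k = newtonPoly b (k + 1) + C (b k) * newtonPoly b k := by
  rw [newtonPoly, newtonPoly, prod_range_succ]; ring

theorem aeval_newtonPoly_succ {A : Type*} [Ring A] [Algebra R A] (a : A) (m : ℕ) :
    aeval a (newtonPoly b (m + 1)) = (a - algebraMap R A (b m)) * aeval a (newtonPoly b m) := by
  rw [newtonPoly, prod_range_succ, mul_comm, map_mul, ← newtonPoly, map_sub, aeval_X, aeval_C]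

theorem X_pow_eq_sum_newtonCoeff (t : ℕ) :
    (X : R[X]) ^ t = ∑ k ∈ range (t + 1), C (newtonCoeff b t k) * newtonPoly b k := by
  induction t with
  | zero => simp [newtonCoeff, newtonPoly]
  | succ t ih =>
    set f : ℕ → R[X] := fun k => C (b k * newtonCoeff b t k) * newtonPoly b k
    have hshift : ∑ k ∈ range (t + 1), f (k + 1) + f 0 = ∑ k ∈ range (t + 1), f k := by
      rw [← sum_range_succ', sum_range_succ]
      simp [f, newtonCoeff_eq_zero_of_lt b (Nat.lt_succ_self t)]
    calc X ^ (t + 1)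
        = ∑ k ∈ range (t + 1), (C (newtonCoeff b t k) * newtonPoly b (k + 1) + f k) := by
          rw [pow_succ', ih, mul_sum]
          refine sum_congr rfl fun k _ => ?_
          rw [mul_left_comm, X_mul_newtonPoly]
          simp only [f, map_mul]
          ring
      _ = ∑ k ∈ range (t + 1), C (newtonCoeff b (t + 1) (k + 1)) * newtonPoly b (k + 1)
            + C (newtonCoeff b (t + 1) 0) * newtonPoly b 0 := by
          rw [sum_add_distrib, ← hshift, ← add_assoc, ← sum_add_distrib]
          simp only [f, newtonCoeff, map_add, add_mul]
      _ = _ := by rw [sum_range_succ' _ (t + 1)]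

theorem aeval_pow_eq_sum_newtonCoeff {A : Type*} [Ring A] [Algebra R A] (a : A) {n : ℕ}
    (hn : aeval a (newtonPoly b n) = 0) (t : ℕ) :
    a ^ t = ∑ k ∈ range n, newtonCoeff b t k • aeval a (newtonPoly b k) := by
  have hvanish : ∀ k, aeval a (newtonPoly b (n + k)) = 0 := fun k => by
    rw [newtonPoly, prod_range_add, map_mul, ← newtonPoly, hn, zero_mul]
  have hsum : ∑ k ∈ range (t + 1), newtonCoeff b t k • aeval a (newtonPoly b k)
      = ∑ k ∈ range (n + (t + 1)), newtonCoeff b t k • aeval a (newtonPoly b k) := by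
    refine sum_subset (range_subset_range.2 (by omega)) fun k _ hk => ?_
    rw [newtonCoeff_eq_zero_of_lt b (by simpa using hk), zero_smul]
  rw [← aeval_X (R := R) a, ← map_pow, X_pow_eq_sum_newtonCoeff b t, map_sum]
  simp only [map_mul, aeval_C, Algebra.algebraMap_eq_smul_one, smul_one_mul]
  rw [hsum, sum_range_add]
  simp [hvanish]

theorem pow_sub_eq_sum_newtonCoeff {A : Type*} [Ring A] [Algebra R A] {a e : A} (hea : e * a = e)
    {m : ℕ} (hann : aeval a (newtonPoly b (m + 1)) = 0)
    (hfix : e * aeval a (newtonPoly b m) = aeval a (newtonPoly b m)) (t : ℕ) :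
    a ^ t - e = ∑ k ∈ range m, newtonCoeff b t k • ((1 - e) * aeval a (newtonPoly b k)) := by
  have hepow : e * a ^ t = e := by
    induction t with
    | zero => rw [pow_zero, mul_one]
    | succ t ih => rw [pow_succ, ← mul_assoc, ih, hea]
  calc a ^ t - e = (1 - e) * a ^ t := by rw [sub_mul, one_mul, hepow]
    _ = ∑ k ∈ range (m + 1), newtonCoeff b t k • ((1 - e) * aeval a (newtonPoly b k)) := by
        rw [aeval_pow_eq_sum_newtonCoeff b a hann, mul_sum]
        simp only [mul_smul_comm]
    _ = _ := by rw [sum_range_succ, sub_mul, one_mul, hfix, sub_self, smul_zero, add_zero]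

theorem rootMultiplicity_newtonPoly_succ [IsDomain R] {m : ℕ} (hb : ∀ j < m, b j ≠ b m) :
    (newtonPoly b (m + 1)).rootMultiplicity (b m) = 1 := by
  have hroot : ¬(newtonPoly b m).IsRoot (b m) := by
    rw [IsRoot, newtonPoly, eval_prod, prod_eq_zero_iff]
    rintro ⟨j, hj, hzero⟩
    rw [eval_sub, eval_X, eval_C, sub_eq_zero] at hzero
    exact hb j (mem_range.1 hj) hzero.symm
  have hne := (monic_newtonPoly b (m + 1)).ne_zero
  rw [newtonPoly, prod_range_succ, ← newtonPoly] at hne ⊢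
  rw [rootMultiplicity_mul hne, rootMultiplicity_eq_zero hroot, rootMultiplicity_X_sub_C_self,
    zero_add]

end NewtonExpansion

theorem norm_newtonCoeff_le {R : Type*} [NormedCommRing R] [NormOneClass R] {b : ℕ → R} {s : ℝ}
    (hs : 0 ≤ s) (t : ℕ) {k : ℕ} (hb : ∀ j ≤ k, ‖b j‖ ≤ s) :
    ‖newtonCoeff b t k‖ ≤ t.choose k * s ^ (t - k) := by
  induction t generalizing k with
  | zero => cases k <;> simp [newtonCoeff]
  | succ t ih =>
    cases k with
    | zero =>
      calc ‖b 0 * newtonCoeff b t 0‖ ≤ s * (t.choose 0 * s ^ (t - 0)) :=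
            (norm_mul_le _ _).trans (mul_le_mul (hb 0 le_rfl) (ih hb) (norm_nonneg _) hs)
        _ = _ := by simp [pow_succ']
    | succ k =>
      have hlast : ‖b (k + 1) * newtonCoeff b t (k + 1)‖ ≤ t.choose (k + 1) * s ^ (t - k) := by
        rcases lt_or_ge t (k + 1) with htk | htk
        · rw [newtonCoeff_eq_zero_of_lt b htk, mul_zero, norm_zero]
          positivity
        · calc ‖b (k + 1) * newtonCoeff b t (k + 1)‖
              ≤ s * (t.choose (k + 1) * s ^ (t - (k + 1))) :=
                (norm_mul_le _ _).trans (mul_le_mul (hb _ le_rfl) (ih hb) (norm_nonneg _) hs)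
            _ = t.choose (k + 1) * s ^ (t - k) := by
                rw [show t - k = t - (k + 1) + 1 by omega, pow_succ]; ring
      calc ‖newtonCoeff b t k + b (k + 1) * newtonCoeff b t (k + 1)‖
          ≤ t.choose k * s ^ (t - k) + t.choose (k + 1) * s ^ (t - k) :=
            (norm_add_le _ _).trans (add_le_add (ih fun j hj => hb j (by omega)) hlast)
        _ = (t + 1).choose (k + 1) * s ^ (t + 1 - (k + 1)) := by
            rw [Nat.choose_succ_succ', Nat.add_sub_add_right]; push_cast; ring

theorem choose_mul_pow_le_exp {β : ℝ} (h0 : 0 ≤ β) (h1 : β < 1) (t k : ℕ) :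
    (t.choose k : ℝ) * β ^ (t - k) ≤ (2 * exp 1 / (1 - β)) ^ k * exp (-(t * (1 - β)) / 2) := by
  set g := 1 - β
  have hg0 : 0 < g := by linarith
  rcases lt_or_ge t k with htk | hkt
  · rw [Nat.choose_eq_zero_of_lt htk, Nat.cast_zero, zero_mul]
    positivity
  have hpow : β ^ (t - k) ≤ exp (-((t - k) * g)) := by
    calc β ^ (t - k) ≤ exp (-g) ^ (t - k) := by
          gcongr
          linarith [add_one_le_exp (-g)]
      _ = exp (-((t - k) * g)) := by
          rw [← exp_nat_mul, Nat.cast_sub hkt]; ring_nf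
  have hchoose : (t.choose k : ℝ) ≤ (2 / g) ^ k * exp (t * g / 2) := by
    calc (t.choose k : ℝ) ≤ (t : ℝ) ^ k / k.factorial := Nat.choose_le_pow_div k t
      _ = (2 / g) ^ k * ((t * g / 2) ^ k / k.factorial) := by
          rw [mul_div_assoc, ← mul_div_assoc, ← mul_pow]
          field_simp
      _ ≤ (2 / g) ^ k * exp (t * g / 2) := by
          gcongr
          exact pow_div_factorial_le_exp _ (by positivity) k
  have hexp : exp (k * g) ≤ exp 1 ^ k := by
    rw [← exp_nat_mul]
    gcongr
    linarith
  calc (t.choose k : ℝ) * β ^ (t - k)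
      ≤ (2 / g) ^ k * exp (t * g / 2) * exp (-((t - k) * g)) := by gcongr
    _ = (2 / g) ^ k * exp (k * g) * exp (-(t * g) / 2) := by
        rw [mul_assoc, mul_assoc, ← exp_add, ← exp_add]
        ring_nf
    _ ≤ (2 / g) ^ k * exp 1 ^ k * exp (-(t * g) / 2) := by gcongr
    _ = (2 * exp 1 / g) ^ k * exp (-(t * g) / 2) := by
        rw [mul_div_right_comm, mul_pow]

theorem sum_range_pow_le_pow {r : ℝ} (hr : 2 ≤ r) : ∀ m : ℕ, ∑ k ∈ range m, r ^ k ≤ r ^ m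
  | 0 => by simp
  | m + 1 => by
    rw [sum_range_succ, pow_succ]
    nlinarith [sum_range_pow_le_pow hr m, pow_pos (by linarith : (0 : ℝ) < r) m]

theorem Matrix.apply_eq_of_mulVec_eq_self {K n : Type*} [Field K] [Fintype n] [DecidableEq n]
    {A : Matrix n n K} (hA : A.charpoly.rootMultiplicity 1 ≤ 1) (h1 : A *ᵥ 1 = 1)
    {v : n → K} (hv : A *ᵥ v = v) (i j : n) : v i = v j := by
  set E := End.eigenspace (toLin' A) 1
  have hmem : ∀ {w : n → K}, A *ᵥ w = w → w ∈ E := fun hw => by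
    rw [End.mem_eigenspace_iff, toLin'_apply, hw, one_smul]
  have hone : (⟨1, hmem h1⟩ : E) ≠ 0 := fun h => by
    simpa using congrFun (congrArg Subtype.val h) i
  have hrank : finrank K E = 1 := by
    refine le_antisymm ?_ (Nat.one_le_iff_ne_zero.2 ?_)
    · have hgeom := LinearMap.finrank_eigenspace_le (toLin' A) 1
      rw [charpoly_toLin'] at hgeom
      exact hgeom.trans hA
    · exact (finrank_pos_iff_exists_ne_zero.2 ⟨_, hone⟩).ne'
  obtain ⟨c, hc⟩ := exists_smul_eq_of_finrank_eq_one hrank hone ⟨v, hmem hv⟩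
  have hv' : v = c • 1 := (congrArg Subtype.val hc).symm
  simp [hv']

theorem Matrix.replicateRow_mul_eq_self {K n : Type*} [Field K] [Fintype n] [DecidableEq n]
    {A B : Matrix n n K} (hA : A.charpoly.rootMultiplicity 1 ≤ 1) (h1 : A *ᵥ 1 = 1)
    (hAB : A * B = B) {p : n → K} (hp : ∑ i, p i = 1) : replicateRow n p * B = B := by
  ext x y
  have hcol : A *ᵥ (fun z => B z y) = fun z => B z y := funext fun z => by
    simpa [mul_apply, mulVec, dotProduct] using congrFun (congrFun hAB z) y
  simp_rw [mul_apply, replicateRow_apply, A.apply_eq_of_mulVec_eq_self hA h1 hcol _ x, ← sum_mul,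
    hp, one_mul]

attribute [local instance] Matrix.linftyOpNormedAddCommGroup Matrix.linftyOpNormedRing
  Matrix.linftyOpNormedAlgebra

theorem Matrix.sum_norm_apply_le_linfty_opNorm {m n α : Type*} [Fintype m] [Fintype n]
    [NormedAddCommGroup α] (A : Matrix m n α) (i : m) : ∑ j, ‖A i j‖ ≤ ‖A‖ := by
  rw [linfty_opNorm_def]
  have hrow := Finset.le_sup (f := fun i => ∑ j, ‖A i j‖₊) (mem_univ i)
  rw [← NNReal.coe_le_coe, NNReal.coe_sum] at hrow
  exact hrow

theorem Matrix.linfty_opNorm_map_ofReal_le_one {m n : Type*} [Fintype m] [Fintype n]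
    {M : Matrix m n ℝ} (h0 : ∀ i j, 0 ≤ M i j) (h1 : ∀ i, ∑ j, M i j = 1) :
    ‖M.map ((↑) : ℝ → ℂ)‖ ≤ 1 := by
  rw [linfty_opNorm_def, NNReal.coe_le_one, Finset.sup_le_iff]
  intro i _
  rw [← NNReal.coe_le_one, NNReal.coe_sum]
  simp [abs_of_nonneg (h0 i _), h1 i]

section SpectralDecay

variable {𝕜 n : Type*} [NormedField 𝕜] [Fintype n] [DecidableEq n]

theorem norm_aeval_newtonPoly_le [Nonempty n] {A : Matrix n n 𝕜} (hA : ‖A‖ ≤ 1) {b : ℕ → 𝕜}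
    {s : ℝ} {k : ℕ} (hb : ∀ j < k, ‖b j‖ ≤ s) : ‖aeval A (newtonPoly b k)‖ ≤ (1 + s) ^ k := by
  induction k with
  | zero => simp [newtonPoly]
  | succ k ih =>
    rw [newtonPoly, prod_range_succ, ← newtonPoly, map_mul, pow_succ]
    refine (norm_mul_le _ _).trans (mul_le_mul (ih fun j hj => hb j (by omega)) ?_
      (norm_nonneg _) (pow_nonneg (by linarith [norm_nonneg (b k), hb k (by omega)]) _))
    rw [map_sub, aeval_X, aeval_C]
    refine (norm_sub_le _ _).trans (add_le_add hA ?_)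
    rw [norm_algebraMap']
    exact hb k (by omega)

theorem norm_pow_sub_le_exp [Nonempty n] {A E : Matrix n n 𝕜} (hA : ‖A‖ ≤ 1) (hE : ‖E‖ ≤ 1)
    (hEA : E * A = E) {b : ℕ → 𝕜} {β : ℝ} (hβ0 : 0 ≤ β) (hβ1 : β < 1) {m : ℕ}
    (hb : ∀ j < m, ‖b j‖ ≤ β) (hann : aeval A (newtonPoly b (m + 1)) = 0)
    (hfix : E * aeval A (newtonPoly b m) = aeval A (newtonPoly b m)) (t : ℕ) :
    ‖A ^ t - E‖ ≤ 2 * (4 * exp 1 / (1 - β)) ^ m * exp (-(t * (1 - β)) / 2) := by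
  have hterm : ∀ k < m, ‖newtonCoeff b t k • ((1 - E) * aeval A (newtonPoly b k))‖
      ≤ 2 * (4 * exp 1 / (1 - β)) ^ k * exp (-(t * (1 - β)) / 2) := fun k hk => by
    have hcoeff := (norm_newtonCoeff_le hβ0 t fun j hj => hb j (by omega)).trans
      (choose_mul_pow_le_exp hβ0 hβ1 t k)
    have hproj : ‖(1 : Matrix n n 𝕜) - E‖ ≤ 2 := by
      linarith [norm_sub_le (1 : Matrix n n 𝕜) E, norm_one (α := Matrix n n 𝕜)]
    have hQ : ‖aeval A (newtonPoly b k)‖ ≤ 2 ^ k :=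
      (norm_aeval_newtonPoly_le hA fun j hj => hb j (by omega)).trans
        (pow_le_pow_left₀ (by linarith) (by linarith) k)
    calc _ ≤ ‖newtonCoeff b t k‖ * (‖1 - E‖ * ‖aeval A (newtonPoly b k)‖) :=
          (norm_smul_le _ _).trans (by gcongr; exact norm_mul_le _ _)
      _ ≤ (2 * exp 1 / (1 - β)) ^ k * exp (-(t * (1 - β)) / 2) * (2 * 2 ^ k) := by
          gcongr
      _ = _ := by
          rw [mul_div_assoc, mul_div_assoc, mul_pow, mul_pow, show (4 : ℝ) = 2 * 2 by norm_num,
            mul_pow 2 2]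
          ring
  have hratio : 2 ≤ 4 * exp 1 / (1 - β) := by
    rw [le_div_iff₀ (by linarith)]
    nlinarith [add_one_le_exp 1]
  rw [pow_sub_eq_sum_newtonCoeff b hEA hann hfix]
  calc _ ≤ ∑ k ∈ range m, 2 * (4 * exp 1 / (1 - β)) ^ k * exp (-(t * (1 - β)) / 2) :=
        (norm_sum_le _ _).trans (sum_le_sum fun k hk => hterm k (mem_range.1 hk))
    _ = 2 * (∑ k ∈ range m, (4 * exp 1 / (1 - β)) ^ k) * exp (-(t * (1 - β)) / 2) := by
        rw [mul_sum, sum_mul]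
    _ ≤ _ := by gcongr; exact sum_range_pow_le_pow hratio m

end SpectralDecay

noncomputable def mixingTimeBound (N : ℕ) (trel ε : ℝ) : ℝ :=
  2 * N * trel * log trel + 4 * (1 + log 2) * N * trel + 2 * (log ε⁻¹ - 1) * trel

theorem mixingTimeBound_nonneg (m : ℕ) {trel ε : ℝ} (htrel : 1 ≤ trel) (hε0 : 0 < ε)
    (hε1 : ε < 1) : 0 ≤ mixingTimeBound (m + 1) trel ε := by
  have hm : (0 : ℝ) ≤ m := m.cast_nonneg
  have h1 : 0 ≤ trel * log trel := mul_nonneg (by linarith) (log_nonneg htrel)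
  have h2 : 0 ≤ trel * log 2 := mul_nonneg (by linarith) (log_nonneg one_le_two)
  have h3 : 0 ≤ trel * log ε⁻¹ :=
    mul_nonneg (by linarith) (log_nonneg ((one_le_inv₀ hε0).2 hε1.le))
  unfold mixingTimeBound
  push_cast
  nlinarith

theorem pow_mul_exp_le_of_mixingTimeBound_lt {g ε : ℝ} (hg0 : 0 < g) (hg1 : g ≤ 1)
    (hε0 : 0 < ε) {m t : ℕ} (ht : mixingTimeBound (m + 1) (1 / g) ε - 1 < t) :
    (4 * exp 1 / g) ^ m * exp (-(t * g) / 2) ≤ ε := by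
  set R := 1 / g
  have hRg : R * g = 1 := one_div_mul_cancel hg0.ne'
  have hlogR : 0 ≤ log R := log_nonneg (one_le_one_div hg0 hg1)
  have hlog2 : 0 ≤ log 2 := log_nonneg one_le_two
  have hm : (0 : ℝ) ≤ m := m.cast_nonneg
  have hL : log (4 * exp 1 / g) = 2 * log 2 + 1 + log R := by
    rw [div_eq_mul_one_div, log_mul (by positivity) (by positivity),
      log_mul (by norm_num) (exp_pos 1).ne', log_exp, show (4 : ℝ) = 2 ^ 2 by norm_num, log_pow]
    push_cast
    ring
  have hT : (mixingTimeBound (m + 1) R ε - 1) * (g / 2) ≤ t * (g / 2) :=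
    mul_le_mul_of_nonneg_right ht.le (by positivity)
  have hkey : m * log (4 * exp 1 / g) + log ε⁻¹ ≤ t * g / 2 := by
    unfold mixingTimeBound at hT
    push_cast at hT
    rw [hL]
    have hexpand : (2 * (m + 1) * R * log R + 4 * (1 + log 2) * (m + 1) * R
        + 2 * (log ε⁻¹ - 1) * R - 1) * (g / 2)
        = ((m + 1) * log R + 2 * (1 + log 2) * (m + 1) + log ε⁻¹ - 1) * (R * g) - g / 2 := by
      ring
    rw [hexpand, hRg] at hT
    nlinarith
  calc (4 * exp 1 / g) ^ m * exp (-(t * g) / 2)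
      = exp (m * log (4 * exp 1 / g) - t * g / 2) := by
        rw [sub_eq_add_neg, exp_add, exp_nat_mul, exp_log (by positivity), neg_div]
    _ ≤ exp (log ε) := by
        gcongr
        rw [log_inv] at hkey
        linarith
    _ = ε := exp_log hε0

theorem Matrix.replicateRow_mul_aeval_newtonPoly {K n : Type*} [Field K] [Fintype n]
    [DecidableEq n] {A : Matrix n n K} (h1 : A *ᵥ 1 = 1) {b : ℕ → K} {m : ℕ}
    (hchar : A.charpoly = newtonPoly b (m + 1)) (hbm : b m = 1) (hb : ∀ j < m, b j ≠ 1)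
    {p : n → K} (hp : ∑ i, p i = 1) :
    replicateRow n p * aeval A (newtonPoly b m) = aeval A (newtonPoly b m) := by
  have hsimple : A.charpoly.rootMultiplicity 1 ≤ 1 := by
    rw [hchar, ← hbm, rootMultiplicity_newtonPoly_succ b (hbm ▸ hb)]
  refine replicateRow_mul_eq_self hsimple h1 ?_ hp
  have hann := aeval_self_charpoly A
  rw [hchar, aeval_newtonPoly_succ, hbm, map_one, sub_mul, one_mul, sub_eq_zero] at hann
  exact hann

theorem half_sum_abs_pow_sub_le_exp {n : Type*} [Fintype n] [DecidableEq n] [Nonempty n]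
    {P : Matrix n n ℝ} {piv : n → ℝ} (hP0 : ∀ i j, 0 ≤ P i j) (hProw : ∀ i, ∑ j, P i j = 1)
    (hpiv0 : ∀ i, 0 ≤ piv i) (hpiv1 : ∑ i, piv i = 1) (hstat : ∀ j, ∑ i, piv i * P i j = piv j)
    {b : ℕ → ℂ} {m : ℕ} (hchar : (P.map (↑)).charpoly = newtonPoly b (m + 1)) (hbm : b m = 1)
    {βs : ℝ} (hβs0 : 0 ≤ βs) (hβs1 : βs < 1) (hb : ∀ j < m, ‖b j‖ ≤ βs) (t : ℕ) (x : n) :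
    1 / 2 * ∑ y, |(P ^ t) x y - piv y|
      ≤ (4 * exp 1 / (1 - βs)) ^ m * exp (-(t * (1 - βs)) / 2) := by
  set P' : Matrix n n ℂ := P.map (↑)
  set E : Matrix n n ℂ := replicateRow n fun i => (piv i : ℂ)
  have hP' : P' *ᵥ 1 = 1 := funext fun i => by
    simpa [P', mulVec, dotProduct] using congrArg ((↑) : ℝ → ℂ) (hProw i)
  have hEP' : E * P' = E := by
    rw [← replicateRow_vecMul]
    congr 1
    funext j
    simpa [P', vecMul, dotProduct] using congrArg ((↑) : ℝ → ℂ) (hstat j)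
  have hE : ‖E‖ ≤ 1 :=
    linfty_opNorm_map_ofReal_le_one (M := replicateRow n piv) (fun _ => hpiv0) fun _ => hpiv1
  have hb_ne : ∀ j < m, b j ≠ 1 := fun j hj h => by
    have := hb j hj
    rw [h, norm_one] at this
    linarith
  have hann : aeval P' (newtonPoly b (m + 1)) = 0 := by rw [← hchar, aeval_self_charpoly]
  have hfix := replicateRow_mul_aeval_newtonPoly hP' hchar hbm hb_ne (p := fun i => (piv i : ℂ))
    (by exact_mod_cast hpiv1)
  have hdecay := norm_pow_sub_le_exp (linfty_opNorm_map_ofReal_le_one hP0 hProw) hE hEP' hβs0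
    hβs1 hb hann hfix t
  have hpow : P' ^ t = (P ^ t).map (↑) := (map_pow Complex.ofRealHom.mapMatrix P t).symm
  calc 1 / 2 * ∑ y, |(P ^ t) x y - piv y| = 1 / 2 * ∑ y, ‖(P' ^ t - E) x y‖ := by
        simp [hpow, E, ← Complex.ofReal_sub, Complex.norm_real]
    _ ≤ 1 / 2 * ‖P' ^ t - E‖ := by gcongr; exact sum_norm_apply_le_linfty_opNorm _ x
    _ ≤ _ := by linarith

/-- Theorem 1.2 (main theorem): for any Markov transition matrix on `N` states with
absolute spectral gap `1 - βs > 0` and stationary distribution `piv`, the total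
variation mixing time satisfies
`t_mix(ε) ≤ 2 N t_rel log t_rel + 4(1 + log 2) N t_rel + 2 (log ε⁻¹ - 1) t_rel`,
where `t_rel = 1/(1 - βs)`. -/
theorem mixing_time_main (N : ℕ) (hN : 1 ≤ N)
    (P : Matrix (Fin N) (Fin N) ℝ) (piv : Fin N → ℝ)
    (hP0 : ∀ i j, 0 ≤ P i j) (hProw : ∀ i, ∑ j, P i j = 1)
    (hpiv0 : ∀ i, 0 ≤ piv i) (hpiv1 : ∑ i, piv i = 1)
    (hstat : ∀ j, ∑ i, piv i * P i j = piv j)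
    (β : Fin N → ℂ)
    (hchar : (P.map (fun a => (a : ℂ))).charpoly
      = ∏ j, (Polynomial.X - Polynomial.C (β j)))
    (hlast : ∀ j : Fin N, (j : ℕ) = N - 1 → β j = 1)
    (βs : ℝ) (hβ : ∀ j : Fin N, (j : ℕ) < N - 1 → ‖β j‖ ≤ βs)
    (hβs0 : 0 ≤ βs) (hβs1 : βs < 1)
    (ε : ℝ) (hε0 : 0 < ε) (hε1 : ε < 1) :
    ((sInf {t : ℕ | ∀ x, (1 / 2) * ∑ y, |(P ^ t) x y - piv y| ≤ ε} : ℕ) : ℝ) ≤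
      2 * N * (1 / (1 - βs)) * Real.log (1 / (1 - βs))
        + 4 * (1 + Real.log 2) * N * (1 / (1 - βs))
        + 2 * (Real.log ε⁻¹ - 1) * (1 / (1 - βs)) := by
  obtain ⟨m, rfl⟩ : ∃ m, N = m + 1 := ⟨N - 1, by omega⟩
  set b : ℕ → ℂ := fun j => if h : j < m + 1 then β ⟨j, h⟩ else 0
  have hchar_b : (P.map (↑)).charpoly = newtonPoly b (m + 1) := by
    rw [hchar, newtonPoly, ← Fin.prod_univ_eq_prod_range]
    exact prod_congr rfl fun j _ => by simp only [b, dif_pos j.isLt, Fin.eta]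
  have hb_last : b m = 1 := (dif_pos m.lt_succ_self).trans (hlast (Fin.last m) (by simp))
  have hb : ∀ j < m, ‖b j‖ ≤ βs := fun j hj => by
    rw [show b j = β ⟨j, by omega⟩ from dif_pos _]
    exact hβ _ (by simpa using hj)
  show _ ≤ mixingTimeBound (m + 1) (1 / (1 - βs)) ε
  set T := mixingTimeBound (m + 1) (1 / (1 - βs)) ε
  have hmem : ⌊T⌋₊ ∈ {t : ℕ | ∀ x, (1 / 2) * ∑ y, |(P ^ t) x y - piv y| ≤ ε} := fun x =>
    (half_sum_abs_pow_sub_le_exp hP0 hProw hpiv0 hpiv1 hstat hchar_b hb_last hβs0 hβs1 hb _ x).trans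
      (pow_mul_exp_le_of_mixingTimeBound_lt (by linarith) (by linarith) hε0
        (Nat.sub_one_lt_floor T))
  exact (Nat.cast_le.2 (Nat.sInf_le hmem)).trans
    (Nat.floor_le (mixingTimeBound_nonneg m (one_le_one_div (by linarith) (by linarith)) hε0 hε1))
end
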